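/- For 1 ≤ i ≤ n−2, the Demazure operators on P = k[X₁^{±1},...,Xₙ^{±1}] satisfy the braid relation Δᵢ Δ_{i+1} Δᵢ = Δ_{i+1} Δᵢ Δ_{i+1}. -/

import Mathlib

/-- The Laurent monomial `X^v` in `k[X₁^{±1},…,Xₙ^{±1}] = k[Fin n →₀ ℤ]`. -/
noncomputable def mono {k : Type*} [CommRing k] {n : ℕ} (v : Fin n →₀ ℤ) :
    AddMonoidAlgebra k (Fin n →₀ ℤ) :=
  AddMonoidAlgebra.single v 1

/-- The `k`-algebra automorphism of the Laurent polynomial ring interchanging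
the variables `X_a` and `X_b` (induced by swapping exponents). -/
noncomputable def swapVars {k : Type*} [CommRing k] {n : ℕ} (a b : Fin n)
    (f : AddMonoidAlgebra k (Fin n →₀ ℤ)) : AddMonoidAlgebra k (Fin n →₀ ℤ) :=
  AddMonoidAlgebra.mapDomain (Finsupp.equivMapDomain (Equiv.swap a b)) f

/-! The operators are pinned down by their defining equations: `1 - X^v` is a non-zero-divisor
for `v ≠ 0`, since a Laurent polynomial fixed by multiplication by `X^v` has `v`-periodic, hence
empty, support. It therefore suffices to compare both sides of the braid relation after
multiplying by a product of such factors, and this is a ring identity. With `x = X_p/X_q` and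
`y = X_q/X_r`, the swaps act by `σ x = x⁻¹`, `σ y = τ x = x y`, `τ y = y⁻¹`, and the two
cleared expressions differ by a multiple of `στσ f - τστ f = 0`. -/

open scoped AddMonoidAlgebra

section Demazure

variable {R : Type*} [CommRing R] {σ τ : R →+* R} {x y : Rˣ} {D₁ D₂ : R → R}

theorem demazure_triple_clear_denom (hσ : Function.Involutive σ) (hσx : σ x = ↑x⁻¹)
    (hσy : σ y = x * y) (hτx : τ x = x * y)
    (hD₁ : ∀ f, (1 - x) * D₁ f = f - σ f) (hD₂ : ∀ f, (1 - y) * D₂ f = f - τ f) (f : R) :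
    (1 - x) * (1 - x) * (1 - y) * (1 - x * y) * D₁ (D₂ (D₁ f))
      = (1 - x * y) * (f - σ f) - (1 - x) * (τ f - τ (σ f))
        - x * (1 - y) * (f - σ f) + (1 - x) * (σ (τ f) - σ (τ (σ f))) := by
  have map_hD₁ (φ : R →+* R) (h : R) : (1 - φ x) * φ (D₁ h) = φ h - φ (σ h) := by
    simpa using congrArg φ (hD₁ h)
  have σ_hD₁ (h : R) : (1 - x) * σ (D₁ h) = x * h - x * σ h := by
    have := map_hD₁ σ h
    rw [hσx, hσ h] at this
    linear_combination (-(x : R)) * this - σ (D₁ h) * x.mul_inv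
  have τ_hD₁ (h : R) : (1 - x * y) * τ (D₁ h) = τ h - τ (σ h) := by
    simpa [hτx] using map_hD₁ τ h
  have στ_hD₁ (h : R) : (1 - y) * σ (τ (D₁ h)) = σ (τ h) - σ (τ (σ h)) := by
    have := map_hD₁ (σ.comp τ) h
    simp only [RingHom.comp_apply, hτx, map_mul, hσx, hσy] at this
    linear_combination this + y * σ (τ (D₁ h)) * x.inv_mul
  have σ_hD₂ (h : R) : (1 - x * y) * σ (D₂ h) = σ h - σ (τ h) := by
    simpa [hσy] using congrArg σ (hD₂ h)
  linear_combination (1 - x) * (1 - y) * (1 - x * y) * hD₁ (D₂ (D₁ f))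
    + (1 - x) * (1 - x * y) * hD₂ (D₁ f) - (1 - x) * (1 - y) * σ_hD₂ (D₁ f)
    + (1 - x * y) * hD₁ f - (1 - x) * τ_hD₁ f - (1 - y) * σ_hD₁ f + (1 - x) * στ_hD₁ f

theorem demazure_braid (hσ : Function.Involutive σ) (hτ : Function.Involutive τ)
    (hστ : ∀ f, σ (τ (σ f)) = τ (σ (τ f)))
    (hσx : σ x = ↑x⁻¹) (hσy : σ y = x * y) (hτx : τ x = x * y) (hτy : τ y = ↑y⁻¹)
    (hx : IsLeftRegular (1 - x : R)) (hy : IsLeftRegular (1 - y : R))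
    (hxy : IsLeftRegular (1 - x * y : R))
    (hD₁ : ∀ f, (1 - x) * D₁ f = f - σ f) (hD₂ : ∀ f, (1 - y) * D₂ f = f - τ f) (f : R) :
    D₁ (D₂ (D₁ f)) = D₂ (D₁ (D₂ f)) := by
  have h₁₂₁ := demazure_triple_clear_denom hσ hσx hσy hτx hD₁ hD₂ f
  have h₂₁₂ := demazure_triple_clear_denom hτ hτy (by rw [hτx, mul_comm]) (by rw [hσy, mul_comm])
    hD₂ hD₁ f
  apply ((hx.mul hx).mul (hy.mul hy)).mul hxy
  linear_combination (1 - y) * h₁₂₁ - (1 - x) * h₂₁₂ - (1 - x) * (1 - y) * hστ f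

end Demazure

theorem AddMonoidAlgebra.isLeftRegular_one_sub_single {k G : Type*} [Ring k] [AddGroup G]
    {v : G} (hv : ¬IsOfFinAddOrder v) : IsLeftRegular (1 - single v 1 : k[G]) := by
  refine isLeftRegular_of_non_zero_divisor _ fun d hd ↦ ?_
  rw [sub_mul, one_mul, sub_eq_zero] at hd
  have periodic (m : ℕ) (x : G) : d.coeff (m • v + x) = d.coeff x := by
    induction m with
    | zero => simp
    | succ m ih =>
      simpa [succ_nsmul', add_assoc, ← ih] using congrArg (coeff · (v + (m • v + x))) hd
  by_contra hd₀
  obtain ⟨x, hx⟩ : ∃ x, d.coeff x ≠ 0 := by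
    by_contra! h
    exact hd₀ (coeff_eq_zero.1 (Finsupp.ext h))
  refine Set.infinite_of_injective_forall_mem (f := fun m : ℕ ↦ m • v + x) ?_ ?_
    d.coeff.support.finite_toSet
  · exact fun _ _ h ↦ injective_nsmul_iff_not_isOfFinAddOrder.2 hv (add_right_cancel h)
  · simpa [periodic] using hx

section Roots

variable {ι : Type*}

noncomputable def root (p q : ι) : ι →₀ ℤ := Finsupp.single p 1 + Finsupp.single q (-1)

theorem equivMapDomain_root (e : ι ≃ ι) (p q : ι) :
    Finsupp.equivMapDomain e (root p q) = root (e p) (e q) := by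
  simp only [root, Finsupp.equivMapDomain_eq_mapDomain, Finsupp.mapDomain_add,
    Finsupp.mapDomain_single]

theorem root_swap (p q : ι) : root q p = -root p q := by
  simp only [root, Finsupp.single_neg, neg_add, neg_neg]
  abel

theorem root_add_root (p q r : ι) : root p q + root q r = root p r := by
  simp only [root, Finsupp.single_neg]
  abel

theorem root_ne_zero {p q : ι} (h : p ≠ q) : root p q ≠ 0 := by
  intro h₀
  simpa [root, Finsupp.single_apply, h.symm] using DFunLike.congr_fun h₀ p

end Roots

section LaurentPolynomial

variable {k : Type*} [CommRing k] {n : ℕ}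

theorem mono_mul (v w : Fin n →₀ ℤ) : (mono v * mono w : k[Fin n →₀ ℤ]) = mono (v + w) := by
  simp [mono, AddMonoidAlgebra.single_mul_single]

noncomputable def monoUnit (v : Fin n →₀ ℤ) : (k[Fin n →₀ ℤ])ˣ where
  val := mono v
  inv := mono (-v)
  val_inv := by rw [mono_mul, add_neg_cancel]; rfl
  inv_val := by rw [mono_mul, neg_add_cancel]; rfl

theorem isLeftRegular_one_sub_mono {v : Fin n →₀ ℤ} (hv : v ≠ 0) :
    IsLeftRegular (1 - mono v : k[Fin n →₀ ℤ]) :=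
  AddMonoidAlgebra.isLeftRegular_one_sub_single <| by rwa [isOfFinAddOrder_iff_eq_zero]

noncomputable def permVars (e : Equiv.Perm (Fin n)) : k[Fin n →₀ ℤ] ≃ₐ[k] k[Fin n →₀ ℤ] :=
  AddMonoidAlgebra.domCongr k k (Finsupp.domCongr e)

theorem swapVars_eq_permVars (a b : Fin n) (f : k[Fin n →₀ ℤ]) :
    swapVars a b f = permVars (Equiv.swap a b) f := rfl

theorem permVars_mul (e e' : Equiv.Perm (Fin n)) (f : k[Fin n →₀ ℤ]) :
    permVars (e * e') f = permVars e (permVars e' f) := by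
  rw [permVars, permVars, permVars, ← AlgEquiv.trans_apply,
    AddMonoidAlgebra.trans_domCongr_domCongr, Equiv.Perm.mul_def, Finsupp.domCongr_trans]

theorem permVars_one (f : k[Fin n →₀ ℤ]) : permVars 1 f = f := by
  rw [permVars, Equiv.Perm.one_def, Finsupp.domCongr_refl, AddMonoidAlgebra.domCongr_refl]
  rfl

theorem permVars_mono (e : Equiv.Perm (Fin n)) (v : Fin n →₀ ℤ) :
    permVars e (mono v : k[Fin n →₀ ℤ]) = mono (Finsupp.equivMapDomain e v) := by
  simp [permVars, mono]

theorem swapVars_involutive (a b : Fin n) : Function.Involutive (swapVars (k := k) a b) := by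
  intro f
  rw [swapVars_eq_permVars, swapVars_eq_permVars, ← permVars_mul, Equiv.swap_mul_self,
    permVars_one]

theorem Equiv.swap_braid {α : Type*} [DecidableEq α] {p q r : α} (hpq : p ≠ q)
    (hqr : q ≠ r) (hpr : p ≠ r) :
    Equiv.swap p q * Equiv.swap q r * Equiv.swap p q
      = Equiv.swap q r * Equiv.swap p q * Equiv.swap q r :=
  calc Equiv.swap p q * Equiv.swap q r * Equiv.swap p q
      = Equiv.swap q p * Equiv.swap r q * Equiv.swap q p := by
        rw [Equiv.swap_comm p q, Equiv.swap_comm q r]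
    _ = Equiv.swap p r := Equiv.swap_mul_swap_mul_swap hqr.symm hpr.symm
    _ = Equiv.swap r p := Equiv.swap_comm _ _
    _ = Equiv.swap q r * Equiv.swap p q * Equiv.swap q r :=
        (Equiv.swap_mul_swap_mul_swap hpq hpr).symm

theorem swapVars_braid {p q r : Fin n} (hpq : p ≠ q) (hqr : q ≠ r) (hpr : p ≠ r)
    (f : k[Fin n →₀ ℤ]) :
    swapVars p q (swapVars q r (swapVars p q f))
      = swapVars q r (swapVars p q (swapVars q r f)) := by
  simp only [swapVars_eq_permVars, ← permVars_mul, ← mul_assoc,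
    Equiv.swap_braid hpq hqr hpr]

theorem swapVars_mono_root (p q : Fin n) :
    swapVars p q (mono (root p q) : k[Fin n →₀ ℤ]) = mono (-root p q) := by
  rw [swapVars_eq_permVars, permVars_mono, equivMapDomain_root, Equiv.swap_apply_left,
    Equiv.swap_apply_right, root_swap]

theorem swapVars_mono_root_left {p q r : Fin n} (hqr : q ≠ r) (hpr : p ≠ r) :
    swapVars p q (mono (root q r) : k[Fin n →₀ ℤ]) = mono (root p r) := by
  rw [swapVars_eq_permVars, permVars_mono, equivMapDomain_root, Equiv.swap_apply_right,
    Equiv.swap_apply_of_ne_of_ne hpr.symm hqr.symm]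

theorem swapVars_mono_root_right {p q r : Fin n} (hpq : p ≠ q) (hpr : p ≠ r) :
    swapVars q r (mono (root p q) : k[Fin n →₀ ℤ]) = mono (root p r) := by
  rw [swapVars_eq_permVars, permVars_mono, equivMapDomain_root, Equiv.swap_apply_left,
    Equiv.swap_apply_of_ne_of_ne hpq hpr]

theorem demazure_braid_of_ne {p q r : Fin n} (hpq : p ≠ q) (hqr : q ≠ r) (hpr : p ≠ r)
    {D₁ D₂ : k[Fin n →₀ ℤ] → k[Fin n →₀ ℤ]}
    (hD₁ : ∀ f, (1 - mono (root p q)) * D₁ f = f - swapVars p q f)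
    (hD₂ : ∀ f, (1 - mono (root q r)) * D₂ f = f - swapVars q r f) (f : k[Fin n →₀ ℤ]) :
    D₁ (D₂ (D₁ f)) = D₂ (D₁ (D₂ f)) := by
  have mono_root_mul : (mono (root p q) * mono (root q r) : k[Fin n →₀ ℤ]) = mono (root p r) := by
    rw [mono_mul, root_add_root]
  refine demazure_braid (σ := (permVars (Equiv.swap p q)).toRingHom)
    (τ := (permVars (Equiv.swap q r)).toRingHom) (x := monoUnit (root p q))
    (y := monoUnit (root q r)) (swapVars_involutive p q) (swapVars_involutive q r)
    (swapVars_braid hpq hqr hpr) (swapVars_mono_root p q) ?_ ?_ (swapVars_mono_root q r)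
    (isLeftRegular_one_sub_mono (root_ne_zero hpq)) (isLeftRegular_one_sub_mono (root_ne_zero hqr))
    ?_ hD₁ hD₂ f
  · exact (swapVars_mono_root_left hqr hpr).trans mono_root_mul.symm
  · exact (swapVars_mono_root_right hpq hpr).trans mono_root_mul.symm
  · exact mono_root_mul ▸ isLeftRegular_one_sub_mono (root_ne_zero hpr)

end LaurentPolynomial

/-- The braid relation `Δᵢ Δ_{i+1} Δᵢ = Δ_{i+1} Δᵢ Δ_{i+1}` for
Demazure operators on the Laurent polynomial ring. -/
theorem stmt8 {k : Type*} [CommRing k] {n : ℕ} (i : ℕ) (hi : i + 2 < n)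
    (D1 D2 : AddMonoidAlgebra k (Fin n →₀ ℤ) → AddMonoidAlgebra k (Fin n →₀ ℤ))
    (hD1 : ∀ f,
      (1 - mono (Finsupp.single (⟨i, by omega⟩ : Fin n) 1
          + Finsupp.single (⟨i + 1, by omega⟩ : Fin n) (-1))) * D1 f
        = f - swapVars ⟨i, by omega⟩ ⟨i + 1, by omega⟩ f)
    (hD2 : ∀ f,
      (1 - mono (Finsupp.single (⟨i + 1, by omega⟩ : Fin n) 1
          + Finsupp.single (⟨i + 2, hi⟩ : Fin n) (-1))) * D2 f
        = f - swapVars ⟨i + 1, by omega⟩ ⟨i + 2, hi⟩ f) :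
    ∀ f, D1 (D2 (D1 f)) = D2 (D1 (D2 f)) :=
  demazure_braid_of_ne (by simp) (by simp) (by simp) hD1 hD2
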